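/- If Δ_k = 0 for k equal to the Markov order K, Δ_j > 0 for all j < K, liminf_n Δ̂_j^n ≥ Δ_j a.s. for each fixed j, and almost surely Δ̂_K^n ≤ n^{−β} eventually, then χ_n = K eventually almost surely. -/
import Mathlib


open MeasureTheory ProbabilityTheory Filter
open scoped Classical

theorem stmt_13 {Ω : Type*} [MeasurableSpace Ω] (μ : Measure Ω)
    [IsProbabilityMeasure μ] (Δ : ℕ → ℝ) (Δhat : ℕ → ℕ → Ω → ℝ)
    (β : ℝ) (hβ : 0 < β) (K : ℕ)
    (hnonneg : ∀ j n ω, 0 ≤ Δhat j n ω)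
    (hΔK : Δ K = 0) (hpos : ∀ j, j < K → 0 < Δ j)
    (hliminf : ∀ j, ∀ᵐ ω ∂μ, Δ j ≤ atTop.liminf fun n => Δhat j n ω)
    (hKtest : ∀ᵐ ω ∂μ, ∀ᶠ n : ℕ in atTop, Δhat K n ω ≤ (n : ℝ) ^ (-β)) :
    ∀ᵐ ω ∂μ, ∀ᶠ n : ℕ in atTop,
      sInf ({k | k < n ∧ Δhat k n ω ≤ (n : ℝ) ^ (-β)} ∪ {n}) = K := by
  have hall : ∀ᵐ ω ∂μ, ∀ j, Δ j ≤ atTop.liminf fun n => Δhat j n ω :=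
    ae_all_iff.2 hliminf
  have htend : Tendsto (fun n : ℕ => (n : ℝ) ^ (-β)) atTop (nhds 0) :=
    (tendsto_rpow_neg_atTop hβ).comp tendsto_natCast_atTop_atTop
  filter_upwards [hall, hKtest] with ω hlim hK
  -- for each j < K, eventually Δhat j n ω > n^{-β}
  have hj : ∀ j < K, ∀ᶠ n : ℕ in atTop, (n : ℝ) ^ (-β) < Δhat j n ω := by
    intro j hjK
    have hΔj := hpos j hjK
    have h1 : ∀ᶠ n : ℕ in atTop, Δ j / 2 < Δhat j n ω := by
      refine eventually_lt_of_lt_liminf (lt_of_lt_of_le (by linarith) (hlim j)) ?_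
      exact ⟨0, eventually_map.2 (Filter.Eventually.of_forall fun n => hnonneg j n ω)⟩
    have h2 : ∀ᶠ n : ℕ in atTop, (n : ℝ) ^ (-β) < Δ j / 2 :=
      htend.eventually (gt_mem_nhds (by linarith))
    filter_upwards [h1, h2] with n h1 h2 using lt_trans h2 h1
  have hjall : ∀ᶠ n : ℕ in atTop, ∀ j ∈ Finset.range K, (n : ℝ) ^ (-β) < Δhat j n ω :=
    (Finset.range K).eventually_all.2 fun j hjK => hj j (Finset.mem_range.1 hjK)
  filter_upwards [hjall, hK, eventually_gt_atTop K] with n hjn hKn hnK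
  have hKmem : K ∈ ({k | k < n ∧ Δhat k n ω ≤ (n : ℝ) ^ (-β)} ∪ {n} : Set ℕ) :=
    Or.inl ⟨hnK, hKn⟩
  refine le_antisymm (Nat.sInf_le hKmem) (le_csInf ⟨K, hKmem⟩ ?_)
  rintro k (⟨hkn, hk⟩ | rfl)
  · by_contra h
    push_neg at h
    exact absurd hk (not_le.2 (hjn k (Finset.mem_range.2 h)))
  · exact hnK.le
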